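/- Let a > 0 and β > 0. For each fixed y ≤ 0, the function t ↦ errfn((y+at)/√(4βt)) − errfn((y−at)/√(4βt)) converges to √π/(2π) as t → ∞, and there exist constants C, M, α > 0 such that for all y ≤ 0 and all t > 0: | errfn( (y+at)/√(4βt) ) − errfn( (y−at)/√(4βt) ) − √π/(2π) | ≤ C errfn( (−y − αt)/(M√t) ). -/

import Mathlib

open MeasureTheory Set

noncomputable def errfn (z : ℝ) : ℝ :=
  (1 / (2 * Real.pi)) * ∫ ξ in Set.Iic z, Real.exp (-ξ^2)

/-! `errfn z + errfn (-z)` is the total Gaussian mass `√π / (2π)`, so the pair of error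
functions differs from its limit by `errfn (-z₁) + errfn z₂`, where `z₁ = (y + at)/√(4βt)` and
`z₂ = (y - at)/√(4βt)`. For `y ≤ 0` we have `z₂ ≤ -z₁`, so by monotonicity this is at most
`2 errfn (-z₁)`, and `-z₁ = (-y - at)/(√(4β) √t)`. For the limit, `z₁ → +∞` and `z₂ → -∞`. -/

open Filter Topology Real

lemma integrable_exp_neg_sq : Integrable (fun ξ : ℝ => exp (-ξ ^ 2)) := by
  simpa using integrable_exp_neg_mul_sq one_pos

lemma integral_exp_neg_sq : ∫ ξ : ℝ, exp (-ξ ^ 2) = √π := by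
  simpa using integral_gaussian 1

lemma errfn_nonneg (z : ℝ) : 0 ≤ errfn z :=
  mul_nonneg (by positivity) (setIntegral_nonneg measurableSet_Iic fun _ _ => (exp_pos _).le)

lemma errfn_mono : Monotone errfn := fun _ _ hxy =>
  mul_le_mul_of_nonneg_left
    (setIntegral_mono_set integrable_exp_neg_sq.integrableOn
      (.of_forall fun _ => (exp_pos _).le) (.of_forall (Iic_subset_Iic.mpr hxy)))
    (by positivity)

lemma errfn_add_errfn_neg (z : ℝ) : errfn z + errfn (-z) = √π / (2 * π) := by
  have h_reflect : ∫ ξ in Iic (-z), exp (-ξ ^ 2) = ∫ ξ in Ioi z, exp (-ξ ^ 2) := by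
    have h := integral_comp_neg_Iic (-z) (fun ξ => exp (-ξ ^ 2))
    simpa only [neg_sq, neg_neg] using h
  rw [errfn, errfn, h_reflect, ← mul_add,
    intervalIntegral.integral_Iic_add_Ioi integrable_exp_neg_sq.integrableOn
      integrable_exp_neg_sq.integrableOn, integral_exp_neg_sq]
  ring

lemma tendsto_errfn_atBot : Tendsto errfn atBot (𝓝 0) := by
  have h := (tendsto_integral_Iic_zero (f := fun ξ => exp (-ξ ^ 2)) (μ := volume)
    tendsto_id).const_mul (1 / (2 * π))
  rwa [mul_zero] at h

lemma tendsto_errfn_atTop : Tendsto errfn atTop (𝓝 (√π / (2 * π))) := by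
  have h := (tendsto_errfn_atBot.comp tendsto_neg_atTop_atBot).const_sub (√π / (2 * π))
  rw [sub_zero] at h
  refine h.congr fun z => ?_
  simp only [Function.comp_apply, ← errfn_add_errfn_neg z, add_sub_cancel_right]

lemma abs_errfn_sub_errfn_sub_le {z w : ℝ} (h : w ≤ -z) :
    |errfn z - errfn w - √π / (2 * π)| ≤ 2 * errfn (-z) := by
  have hsum := errfn_add_errfn_neg z
  have hw := errfn_mono h
  rw [abs_le]
  constructor <;> linarith [errfn_nonneg w, errfn_nonneg (-z)]

lemma tendsto_add_mul_div_sqrt_mul_atTop (y : ℝ) {a k : ℝ} (ha : 0 < a) (hk : 0 < k) :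
    Tendsto (fun t => (y + a * t) / √(k * t)) atTop atTop := by
  have h_const : Tendsto (fun t => y / √(k * t)) atTop (𝓝 0) :=
    tendsto_const_nhds.div_atTop (tendsto_sqrt_atTop.comp (tendsto_id.const_mul_atTop hk))
  have h_lin : Tendsto (fun t => a / √k * √t) atTop atTop :=
    tendsto_sqrt_atTop.const_mul_atTop (by positivity)
  refine (h_const.add_atTop h_lin).congr' ?_
  filter_upwards [eventually_gt_atTop 0] with t ht
  rw [add_div, sqrt_mul hk.le]
  field_simp
  rw [sq_sqrt ht.le]
  ring

lemma tendsto_sub_mul_div_sqrt_mul_atBot (y : ℝ) {a k : ℝ} (ha : 0 < a) (hk : 0 < k) :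
    Tendsto (fun t => (y - a * t) / √(k * t)) atTop atBot :=
  (tendsto_neg_atTop_atBot.comp (tendsto_add_mul_div_sqrt_mul_atTop (-y) ha hk)).congr
    fun t => by simp only [Function.comp_apply]; ring

theorem errfn_pair_limit (a β : ℝ) (ha : 0 < a) (hβ : 0 < β) :
    (∀ y : ℝ, y ≤ 0 →
      Filter.Tendsto (fun t : ℝ =>
          errfn ((y + a*t) / Real.sqrt (4*β*t)) -
          errfn ((y - a*t) / Real.sqrt (4*β*t)))
        Filter.atTop (nhds (Real.sqrt Real.pi / (2*Real.pi)))) ∧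
    ∃ C > 0, ∃ M > 0, ∃ α > 0, ∀ y : ℝ, y ≤ 0 → ∀ t : ℝ, 0 < t →
      |errfn ((y + a*t) / Real.sqrt (4*β*t)) -
        errfn ((y - a*t) / Real.sqrt (4*β*t)) -
        Real.sqrt Real.pi / (2*Real.pi)| ≤
          C * errfn ((-y - α*t) / (M * Real.sqrt t)) := by
  have h4β : 0 < 4 * β := by positivity
  refine ⟨fun y _ => ?_, 2, two_pos, √(4 * β), sqrt_pos.mpr h4β, a, ha, fun y hy t ht => ?_⟩
  · simpa using (tendsto_errfn_atTop.comp (tendsto_add_mul_div_sqrt_mul_atTop y ha h4β)).sub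
      (tendsto_errfn_atBot.comp (tendsto_sub_mul_div_sqrt_mul_atBot y ha h4β))
  · have h_le : (y - a * t) / √(4 * β * t) ≤ -((y + a * t) / √(4 * β * t)) := by
      rw [← neg_div]
      gcongr
      linarith
    calc _ ≤ 2 * errfn (-((y + a * t) / √(4 * β * t))) := abs_errfn_sub_errfn_sub_le h_le
      _ = _ := by rw [sqrt_mul h4β.le, ← neg_div, neg_add']
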